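/- arXiv:2510.24298 — 5 statements merged into one kernel-verified Lean document; each statement's English description precedes it below -/
import Mathlib

section
/- Let G be a finite group, let R be a disk-like G-transfer system, and let H ≤ G be a subgroup. Then for every subgroup K ≤ H one has K R H if and only if there exists a subgroup K' of G with K' R G and K' ⊓ H = K. (This is the orbit-level content of the identification I_F(H) = H-Fin^{F_H} for disk-like indexing systems.) -/
/-- A `G`-transfer system: a relation on the subgroups of `G` that is reflexive,
transitive, refines inclusion, and is closed under conjugation and restriction. -/
structure TransferSystem (G : Type*) [Group G] where
  rel : Subgroup G → Subgroup G → Prop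
  refl : ∀ H : Subgroup G, rel H H
  trans : ∀ {K H L : Subgroup G}, rel K H → rel H L → rel K L
  le_of_rel : ∀ {K H : Subgroup G}, rel K H → K ≤ H
  conj : ∀ {K H : Subgroup G} (g : G), rel K H →
    rel (K.map (MulAut.conj g).toMonoidHom) (H.map (MulAut.conj g).toMonoidHom)
  restrict : ∀ {K H : Subgroup G} (L : Subgroup G), rel K H → L ≤ H → rel (K ⊓ L) L

/-- A transfer system is disk-like if it is the least transfer system `R` with
`K R G` for all `K` in some set `A` of subgroups (the transfer system generated by `A`). -/
def TransferSystem.IsDiskLike {G : Type*} [Group G] (R : TransferSystem G) : Prop :=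
  ∃ A : Set (Subgroup G),
    (∀ K ∈ A, R.rel K ⊤) ∧
    ∀ S : TransferSystem G, (∀ K ∈ A, S.rel K ⊤) →
      ∀ K H : Subgroup G, R.rel K H → S.rel K H

/-- Auxiliary transfer system: `K S H` iff `K ≤ H` and `K = K' ⊓ H` for some `K' R ⊤`. -/
def auxTS {G : Type*} [Group G] (R : TransferSystem G) : TransferSystem G where
  rel K H := K ≤ H ∧ ∃ K' : Subgroup G, R.rel K' ⊤ ∧ K' ⊓ H = K
  refl H := ⟨le_rfl, ⊤, R.refl ⊤, top_inf_eq H⟩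
  trans := by
    rintro K H L ⟨hKH, K₁, h₁, rfl⟩ ⟨hHL, K₂, h₂, hK₂⟩
    refine ⟨hKH.trans hHL, K₁ ⊓ K₂, R.trans (R.restrict K₂ h₁ le_top) h₂, ?_⟩
    rw [inf_assoc, ← hK₂]
  le_of_rel h := h.1
  conj := by
    rintro K H g ⟨hKH, K', h', rfl⟩
    constructor
    · exact Subgroup.map_mono hKH
    · refine ⟨K'.map (MulAut.conj g).toMonoidHom, ?_, ?_⟩
      · have := R.conj g h'
        rwa [Subgroup.map_top_of_surjective _ (MulAut.conj g).surjective] at this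
      · rw [← Subgroup.map_inf _ _ _ (MulAut.conj g).injective]
  restrict := by
    rintro K H L ⟨hKH, K', h', rfl⟩ hLH
    refine ⟨inf_le_right, K', h', ?_⟩
    rw [inf_assoc, inf_eq_right.mpr hLH]

/-- For a disk-like `G`-transfer system `R` and a subgroup `H ≤ G`, a subgroup `K ≤ H`
satisfies `K R H` if and only if there is `K' ≤ G` with `K' R ⊤` and `K' ⊓ H = K`. -/
theorem diskLike_rel_iff {G : Type*} [Group G] [Finite G] (R : TransferSystem G)
    (hR : R.IsDiskLike) (H : Subgroup G) :
    ∀ K : Subgroup G, K ≤ H →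
      (R.rel K H ↔ ∃ K' : Subgroup G, R.rel K' ⊤ ∧ K' ⊓ H = K) := by
  intro K hKH
  constructor
  · intro h
    obtain ⟨A, hA, hmin⟩ := hR
    have := hmin (auxTS R) (fun K hK => ⟨le_top, K, hA K hK, inf_top_eq K⟩) K H h
    exact this.2
  · rintro ⟨K', h', rfl⟩
    exact R.restrict H h' le_top
end

section
/- Let G be a finite group. The assignment R ↦ F_R := {H ≤ G | H R G} sends every disk-like G-transfer system R to a based family of subgroups of G (i.e. G ∈ F_R and F_R is closed under conjugation), and this assignment is order-preserving and injective on disk-like transfer systems: if R ≤ S (as relations) then F_R ⊆ F_S, and if R and S are disk-like with F_R = F_S then R = S. -/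
/-- The assignment `R ↦ F_R = {H | H R G}` sends every disk-like transfer system to a
based family (contains `G` and is closed under conjugation), is order-preserving, and is
injective on disk-like transfer systems. -/
theorem family_of_diskLike {G : Type*} [Group G] [Finite G] :
    (∀ R : TransferSystem G, R.IsDiskLike →
      R.rel ⊤ ⊤ ∧
      ∀ H : Subgroup G, R.rel H ⊤ → ∀ g : G,
        R.rel (H.map (MulAut.conj g).toMonoidHom) ⊤) ∧
    (∀ R S : TransferSystem G,
      (∀ K H : Subgroup G, R.rel K H → S.rel K H) →
      {H : Subgroup G | R.rel H ⊤} ⊆ {H : Subgroup G | S.rel H ⊤}) ∧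
    (∀ R S : TransferSystem G, R.IsDiskLike → S.IsDiskLike →
      {H : Subgroup G | R.rel H ⊤} = {H : Subgroup G | S.rel H ⊤} →
      R.rel = S.rel) := by
  refine ⟨fun R _ => ⟨R.refl ⊤, fun H hH g => ?_⟩, fun R S h H hH => h _ _ hH, ?_⟩
  · have := R.conj g hH
    rwa [Subgroup.map_top_of_surjective _ (MulAut.conj g).surjective] at this
  · rintro R S ⟨A, hA, hmin⟩ ⟨B, hB, hmin'⟩ hF
    have h1 : ∀ K H, R.rel K H → S.rel K H := by
      refine hmin S fun K hK => ?_
      have : K ∈ {H : Subgroup G | R.rel H ⊤} := hA K hK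
      rw [hF] at this; exact this
    have h2 : ∀ K H, S.rel K H → R.rel K H := by
      refine hmin' R fun K hK => ?_
      have : K ∈ {H : Subgroup G | S.rel H ⊤} := hB K hK
      rw [← hF] at this; exact this
    funext K H
    exact propext ⟨h1 K H, h2 K H⟩
end

section
/- Let G be a group and H, K ≤ G subgroups. Choosing for each double coset D in the double coset space H\G/K a representative a_D ∈ G, there is an H-equivariant bijection G ⧸ K ≃ Σ (D : H\G/K), H ⧸ ((a_D K a_D⁻¹).subgroupOf H), where H acts on G ⧸ K by left translation and on each summand H ⧸ ((a_D K a_D⁻¹).subgroupOf H) by left translation (the double coset formula res_H^G G/K ≅ ⨿_{a ∈ H\G/K} H/(H ∩ aKa⁻¹)). -/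
/-!
The `H`-orbits on `G ⧸ K` are the images of the double cosets `HaK`, and the stabilizer of
`aK` in `H` is `H ∩ aKa⁻¹`. Orbit–stabilizer, applied to one representative of each orbit,
identifies `G ⧸ K` with `Σ D, H ⧸ (H ∩ a_D K a_D⁻¹)` compatibly with the `H`-actions.
-/

namespace MulAction

section

variable {H X ι : Type*} [Group H] [MulAction H X] {x : ι → X} {S : ι → Subgroup H}

variable (x S) in
def ofSigmaQuotientStabilizer (hS : ∀ i, S i = stabilizer H (x i)) : (Σ i, H ⧸ S i) → X :=
  fun p ↦ ofQuotientStabilizer H (x p.1) (Subgroup.quotientEquivOfEq (hS p.1) p.2)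

@[simp]
theorem ofSigmaQuotientStabilizer_mk (hS : ∀ i, S i = stabilizer H (x i)) (i : ι) (h : H) :
    ofSigmaQuotientStabilizer x S hS ⟨i, h⟩ = h • x i :=
  rfl

theorem ofSigmaQuotientStabilizer_smul (hS : ∀ i, S i = stabilizer H (x i)) (h : H)
    (p : Σ i, H ⧸ S i) :
    ofSigmaQuotientStabilizer x S hS ⟨p.1, h • p.2⟩ = h • ofSigmaQuotientStabilizer x S hS p := by
  obtain ⟨i, q⟩ := p
  induction q using QuotientGroup.induction_on with
  | H h' => simp [mul_smul]

theorem bijective_ofSigmaQuotientStabilizer (hS : ∀ i, S i = stabilizer H (x i))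
    (hx : Function.Bijective fun i ↦ (Quotient.mk'' (x i) : orbitRel.Quotient H X)) :
    Function.Bijective (ofSigmaQuotientStabilizer x S hS) := by
  constructor
  · rintro ⟨i, q⟩ ⟨j, q'⟩ hqq'
    induction q using QuotientGroup.induction_on with | H h => ?_
    induction q' using QuotientGroup.induction_on with | H h' => ?_
    have hij : i = j := by
      refine hx.1 (Quotient.sound ⟨h⁻¹ * h', ?_⟩)
      simpa [mul_smul, inv_smul_eq_iff] using hqq'.symm
    subst hij
    exact congrArg (Sigma.mk i)
      ((Subgroup.quotientEquivOfEq (hS i)).injective (injective_ofQuotientStabilizer H _ hqq'))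
  · intro y
    obtain ⟨i, hi⟩ := hx.2 (Quotient.mk'' y)
    obtain ⟨h, hy⟩ := Quotient.exact hi
    exact ⟨⟨i, (h⁻¹ : H)⟩, by simp [← hy]⟩

theorem exists_equiv_sigma_quotient_stabilizer (hS : ∀ i, S i = stabilizer H (x i))
    (hx : Function.Bijective fun i ↦ (Quotient.mk'' (x i) : orbitRel.Quotient H X)) :
    ∃ e : X ≃ Σ i, H ⧸ S i, ∀ (h : H) (y : X), e (h • y) = ⟨(e y).1, h • (e y).2⟩ := by
  set f := Equiv.ofBijective _ (bijective_ofSigmaQuotientStabilizer hS hx)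
  refine ⟨f.symm, fun h y ↦ f.symm_apply_eq.mpr ?_⟩
  conv_lhs => rw [← f.apply_symm_apply y]
  exact (ofSigmaQuotientStabilizer_smul hS h (f.symm y)).symm

end

theorem stabilizer_quotient_mk {G : Type*} [Group G] (K : Subgroup G) (a : G) :
    stabilizer G (a : G ⧸ K) = K.map (MulAut.conj a).toMonoidHom := calc
  stabilizer G (a : G ⧸ K) = stabilizer G (a • ((1 : G) : G ⧸ K)) := by
    rw [Quotient.smul_mk, smul_eq_mul, mul_one]
  _ = (stabilizer G ((1 : G) : G ⧸ K)).map (MulAut.conj a).toMonoidHom :=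
    stabilizer_smul_eq_stabilizer_map_conj a _
  _ = K.map (MulAut.conj a).toMonoidHom := by rw [stabilizer_quotient]

theorem stabilizer_subgroup_quotient_mk {G : Type*} [Group G] (H K : Subgroup G) (a : G) :
    stabilizer H (a : G ⧸ K) = (K.map (MulAut.conj a).toMonoidHom).subgroupOf H := by
  ext h
  rw [Subgroup.mem_subgroupOf, ← stabilizer_quotient_mk, mem_stabilizer_iff, mem_stabilizer_iff]
  rfl

end MulAction

namespace DoubleCoset

open MulAction

variable {G : Type*} [Group G] (H K : Subgroup G)

theorem orbitRel_quotient_mk_eq_iff (a b : G) :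
    (Quotient.mk'' (a : G ⧸ K) : orbitRel.Quotient H (G ⧸ K)) = Quotient.mk'' (b : G ⧸ K) ↔
      mk H K a = mk H K b := by
  rw [Quotient.eq'', orbitRel_apply, mem_orbit_iff, eq_comm, DoubleCoset.eq]
  constructor
  · rintro ⟨⟨h, hh⟩, hb⟩
    exact ⟨h, hh, (h * b)⁻¹ * a, QuotientGroup.eq.mp hb, by group⟩
  · rintro ⟨h, hh, k, hk, rfl⟩
    refine ⟨⟨h, hh⟩, QuotientGroup.eq.mpr ?_⟩
    simpa [mul_assoc] using hk

theorem bijective_orbitRel_quotient_mk_rep (rep : Quotient (H : Set G) K → G)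
    (hrep : ∀ D, mk H K (rep D) = D) :
    Function.Bijective fun D ↦ (Quotient.mk'' (rep D : G ⧸ K) : orbitRel.Quotient H (G ⧸ K)) := by
  constructor
  · intro D D' hDD'
    rwa [← hrep D, ← hrep D', ← orbitRel_quotient_mk_eq_iff]
  · refine Quotient.ind fun y ↦ QuotientGroup.induction_on y fun g ↦ ⟨mk H K g, ?_⟩
    exact (orbitRel_quotient_mk_eq_iff H K _ _).mpr (hrep _)

end DoubleCoset

/-- The double coset formula: choosing a representative `rep D ∈ G` for each double coset
`D ∈ H\G/K`, there is an `H`-equivariant bijection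
`G ⧸ K ≃ Σ (D : H\G/K), H ⧸ ((rep D) K (rep D)⁻¹ ⊓ H)`. -/
theorem double_coset_formula {G : Type*} [Group G] (H K : Subgroup G)
    (rep : DoubleCoset.Quotient (H : Set G) (K : Set G) → G)
    (hrep : ∀ D : DoubleCoset.Quotient (H : Set G) (K : Set G), DoubleCoset.mk H K (rep D) = D) :
    ∃ e : (G ⧸ K) ≃
        (Σ D : DoubleCoset.Quotient (H : Set G) (K : Set G),
          H ⧸ ((Subgroup.map (MulAut.conj (rep D)).toMonoidHom K).subgroupOf H)),
      ∀ (h : H) (x : G ⧸ K),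
        e (h • x) = ⟨(e x).1, h • (e x).2⟩ :=
  MulAction.exists_equiv_sigma_quotient_stabilizer
    (fun D ↦ (MulAction.stabilizer_subgroup_quotient_mk H K (rep D)).symm)
    (DoubleCoset.bijective_orbitRel_quotient_mk_rep H K rep hrep)
end

section
/- Let G be a group, U a G-set, and K', H ≤ G subgroups; set K := H ⊓ K'. If there exists an injective G-equivariant map G ⧸ K' → U, then there exists an injective H-equivariant map H ⧸ (K.subgroupOf H) → U, where H acts on U by restricting the G-action. (Hence the relation →_U, defined for subgroups K ≤ H by the existence of an injective H-equivariant map H ⧸ (K.subgroupOf H) → U, satisfies the disk-like closure condition: K' →_U G and H ⊓ K' = K imply K →_U H.) -/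
/-- If the orbit `G ⧸ K'` embeds `G`-equivariantly into a `G`-set `U`, then for any
subgroup `H ≤ G` the orbit `H ⧸ (H ⊓ K')` embeds `H`-equivariantly into `U` (with the
restricted `H`-action). This is the disk-like closure property of the relation `→_U`. -/
theorem orbit_embedding_restriction {G U : Type*} [Group G] [MulAction G U]
    (H K' : Subgroup G)
    (hembed : ∃ f : G ⧸ K' → U, Function.Injective f ∧
      ∀ (g : G) (c : G ⧸ K'), f (g • c) = g • f c) :
    ∃ f : H ⧸ ((H ⊓ K').subgroupOf H) → U, Function.Injective f ∧
      ∀ (h : H) (c : H ⧸ ((H ⊓ K').subgroupOf H)), f (h • c) = h • f c := by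
  obtain ⟨f, hinj, hequiv⟩ := hembed
  refine ⟨Quotient.lift (fun h : H => f (QuotientGroup.mk (h : G))) ?_, ?_, ?_⟩
  · intro a b hab
    have h1 : (a : G)⁻¹ * b ∈ K' := by
      have := (QuotientGroup.leftRel_apply.mp hab)
      simpa [Subgroup.mem_subgroupOf] using this.2
    exact congrArg f (QuotientGroup.eq.mpr h1)
  · intro a b hab
    induction a using Quotient.inductionOn with | _ a =>
    induction b using Quotient.inductionOn with | _ b =>
    have : (QuotientGroup.mk (a : G) : G ⧸ K') = QuotientGroup.mk (b : G) :=
      hinj hab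
    have h1 : (a : G)⁻¹ * b ∈ K' := QuotientGroup.eq.mp this
    exact Quotient.sound (QuotientGroup.leftRel_apply.mpr
      (by simp [Subgroup.mem_subgroupOf, h1, mul_mem (inv_mem a.2) b.2]))
  · intro h c
    induction c using Quotient.inductionOn with | _ c =>
    show f (QuotientGroup.mk ((h * c : H) : G)) = _
    rw [Subgroup.coe_mul, show (QuotientGroup.mk ((h : G) * c) : G ⧸ K') =
      (h : G) • QuotientGroup.mk (c : G) from rfl, hequiv]
    rfl
end

section
/- Let G be a group, M an additive commutative group on which G acts by additive automorphisms (a DistribMulAction of G on M), and K ≤ H ≤ G subgroups with H ⧸ (K.subgroupOf H) finite. Let s : H ⧸ (K.subgroupOf H) → H be any section of the quotient map (i.e. the coset of s(c) is c for every c). Then for every m ∈ M fixed by K, the element t_K^H(m) := Σ_{c ∈ H ⧸ (K.subgroupOf H)} s(c) • m is fixed by H, and it is independent of the choice of section s. Thus every abelian G-group admits internal transfer maps t_K^H : M^K → M^H for all K ≤ H. -/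
/-- Every abelian `G`-group `M` admits internal transfer maps: for `K ≤ H ≤ G` with
finite coset space, any section `s` of `H ⧸ (K.subgroupOf H) → H`, and any `K`-fixed
`m ∈ M`, the sum `Σ_c s(c) • m` is `H`-fixed and independent of the choice of section. -/
theorem abelian_group_transfer {G M : Type*} [Group G] [AddCommGroup M]
    [DistribMulAction G M] (K H : Subgroup G) (hKH : K ≤ H)
    [Fintype (H ⧸ (K.subgroupOf H))]
    (m : M) (hm : ∀ k : G, k ∈ K → k • m = m)
    (s s' : H ⧸ (K.subgroupOf H) → H)
    (hs : ∀ c : H ⧸ (K.subgroupOf H), (QuotientGroup.mk (s c) : H ⧸ (K.subgroupOf H)) = c)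
    (hs' : ∀ c : H ⧸ (K.subgroupOf H), (QuotientGroup.mk (s' c) : H ⧸ (K.subgroupOf H)) = c) :
    (∀ h : G, h ∈ H →
      h • (∑ c : H ⧸ (K.subgroupOf H), ((s c : G) • m)) =
        ∑ c : H ⧸ (K.subgroupOf H), ((s c : G) • m)) ∧
    (∑ c : H ⧸ (K.subgroupOf H), ((s c : G) • m)) =
      ∑ c : H ⧸ (K.subgroupOf H), ((s' c : G) • m) := by
  have key : ∀ a b : H, (QuotientGroup.mk a : H ⧸ (K.subgroupOf H)) = QuotientGroup.mk b →
      (a : G) • m = (b : G) • m := by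
    intro a b hab
    have h1 : a⁻¹ * b ∈ K.subgroupOf H := (QuotientGroup.eq).mp hab
    have h2 : ((a : G)⁻¹ * b) ∈ K := h1
    calc (a : G) • m = (a : G) • (((a : G)⁻¹ * b) • m) := by rw [hm _ h2]
      _ = (b : G) • m := by rw [smul_smul, mul_inv_cancel_left]
  constructor
  · intro h hh
    rw [Finset.smul_sum]
    refine Fintype.sum_bijective (fun c => (⟨h, hh⟩ : H) • c)
      (MulAction.bijective _) _ _ ?_
    intro c
    have : (QuotientGroup.mk (s ((⟨h, hh⟩ : H) • c)) : H ⧸ (K.subgroupOf H)) =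
        QuotientGroup.mk ((⟨h, hh⟩ : H) * s c) := by
      rw [hs]
      conv_lhs => rw [← hs c]
      rfl
    rw [key _ _ this]
    simp [smul_smul]
  · exact Finset.sum_congr rfl fun c _ => key _ _ (by rw [hs, hs'])
end
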